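/- arXiv:2009.00874 — 2 statements merged into one kernel-verified Lean document; each statement's English description precedes it below -/
import Mathlib

section
/- For each j ∈ {1,…,d}, the Shapley effect admits the ANOVA representation φ_j = Σ_{∅≠u⊆{1,…,d}, j∈u} σ_u² / |u|. -/
/-!
For `j ∉ u`, the increment `τ̄²_{u ∪ {j}} - τ̄²_u` is the sum of `σ_v²` over the sets `v ∋ j`
disjoint from `u`. Exchanging the two sums, `φ_j = ∑_{v ∋ j} w(v) σ_v²` with
`w(v) = (1/d) ∑_{u ⊆ vᶜ} C(d-1, |u|)⁻¹`, and grouping the `u` by size reduces `w(v) = 1/|v|` to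
`∑_{k ≤ n} C(n, k) / C(n + r, k) = (n + r + 1) / (r + 1)`, a rescaled hockey-stick identity.
-/

open MeasureTheory Finset

/-- The ANOVA decomposition component `f_u`, defined recursively by
`f_∅ = μ` (the mean) and
`f_u(x) = ∫ f(x_u, y_{-u}) ρ_{-u}(y_{-u}) dy_{-u} - ∑_{v ⊊ u} f_v(x)`. -/
noncomputable def anova {d : ℕ} (μ : Fin d → Measure ℝ) (f : (Fin d → ℝ) → ℝ) :
    Finset (Fin d) → (Fin d → ℝ) → ℝ := fun u x =>
  (∫ y, f (fun i => if i ∈ u then x i else y i) ∂Measure.pi μ) -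
    ∑ v ∈ (u.powerset.erase u).attach, anova μ f v.1 x
termination_by u => u.card
decreasing_by
  exact Finset.card_lt_card (Finset.ssubset_iff_subset_ne.mpr
    ⟨Finset.mem_powerset.mp (Finset.mem_of_mem_erase v.2), Finset.ne_of_mem_erase v.2⟩)

/-- The ANOVA variance component `σ_u² = ∫ (f_u)² dρ` (note that `f_u` depends only on
the coordinates in `u`, so this agrees with `∫_{Ω_u} (f_u(x_u))² ρ_u(x_u) dx_u`). -/
noncomputable def sigmaSq {d : ℕ} (μ : Fin d → Measure ℝ) (f : (Fin d → ℝ) → ℝ)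
    (u : Finset (Fin d)) : ℝ :=
  ∫ x, (anova μ f u x) ^ 2 ∂Measure.pi μ

/-- The main effect `τ̲²_u = ∑_{∅ ≠ v ⊆ u} σ_v²` (equal to `0` for `u = ∅`). -/
noncomputable def mainEffect {d : ℕ} (μ : Fin d → Measure ℝ) (f : (Fin d → ℝ) → ℝ)
    (u : Finset (Fin d)) : ℝ :=
  ∑ v ∈ u.powerset.erase ∅, sigmaSq μ f v

/-- The total effect `τ̄²_u = ∑_{∅ ≠ v ⊆ [1:d], v ∩ u ≠ ∅} σ_v²` (equal to `0` for `u = ∅`). -/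
noncomputable def totalEffect {d : ℕ} (μ : Fin d → Measure ℝ) (f : (Fin d → ℝ) → ℝ)
    (u : Finset (Fin d)) : ℝ :=
  ∑ v ∈ (Finset.univ : Finset (Fin d)).powerset.filter (fun v => (v ∩ u).Nonempty),
    sigmaSq μ f v

/-- The Shapley effect
`φ_j = (1/d) ∑_{u ⊆ [1:d]∖{j}} C(d-1, |u|)⁻¹ (τ̄²_{u∪{j}} - τ̄²_u)`. -/
noncomputable def shapley {d : ℕ} (μ : Fin d → Measure ℝ) (f : (Fin d → ℝ) → ℝ)
    (j : Fin d) : ℝ :=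
  (1 / (d : ℝ)) * ∑ u ∈ (Finset.univ.erase j).powerset,
    ((d - 1).choose u.card : ℝ)⁻¹ *
      (totalEffect μ f (insert j u) - totalEffect μ f u)

theorem Nat.sum_range_choose_add_sub_sub (n r : ℕ) :
    ∑ k ∈ range (n + 1), (n + r - k).choose (n - k) = (n + r + 1).choose n := by
  rw [← sum_range_reflect]
  have hterm : ∀ i ∈ range (n + 1),
      (n + r - (n + 1 - 1 - i)).choose (n - (n + 1 - 1 - i)) = (i + r).choose r := by
    intro i hi
    have hin : i ≤ n := mem_range_succ_iff.mp hi
    rw [show n + r - (n + 1 - 1 - i) = i + r by omega, show n - (n + 1 - 1 - i) = i by omega,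
      Nat.choose_symm_add]
  rw [sum_congr rfl hterm, Nat.sum_range_add_choose, Nat.choose_symm_of_eq_add (by ring)]

theorem sum_range_choose_div_choose_add {K : Type*} [Field K] [CharZero K] (n r : ℕ) :
    ∑ k ∈ range (n + 1), (n.choose k : K) / (n + r).choose k = (n + r + 1) / (r + 1) := by
  have hpos : ∀ k ≤ n + r, ((n + r).choose k : K) ≠ 0 := fun k hk =>
    Nat.cast_ne_zero.mpr (Nat.choose_pos hk).ne'
  -- Trading `C(n + r, k)` for the fixed `C(n + r, n)` leaves a hockey-stick sum.
  have hterm : ∀ k ∈ range (n + 1), (n.choose k : K) / (n + r).choose k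
      = ((n + r - k).choose (n - k) : K) / (n + r).choose n := by
    intro k hk
    have hkn : k ≤ n := mem_range_succ_iff.mp hk
    rw [div_eq_div_iff (hpos k (by omega)) (hpos n (by omega))]
    have h := Nat.choose_mul (n := n + r) hkn
    rw [mul_comm, mul_comm ((n + r - k).choose (n - k) : K)]
    exact_mod_cast h
  have hsucc : ((n + r).choose n : K) * (n + r + 1) = (n + r + 1).choose n * (r + 1) := by
    have h := Nat.choose_mul_succ_eq (n + r) n
    rw [show n + r + 1 - n = r + 1 by omega] at h
    exact_mod_cast h
  rw [sum_congr rfl hterm, ← sum_div, show ∑ k ∈ range (n + 1), ((n + r - k).choose (n - k) : K) = (n + r + 1).choose n by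
    exact_mod_cast Nat.sum_range_choose_add_sub_sub n r,
    div_eq_div_iff (hpos n (by omega)) (by exact_mod_cast r.succ_ne_zero)]
  linear_combination -hsucc

theorem Finset.sum_powerset_inv_choose_card_add {α K : Type*} [Field K] [CharZero K]
    (s : Finset α) (r : ℕ) :
    ∑ u ∈ s.powerset, ((#s + r).choose #u : K)⁻¹ = (#s + r + 1) / (r + 1) := by
  rw [sum_powerset_apply_card (fun k => ((#s + r).choose k : K)⁻¹), ←
    sum_range_choose_div_choose_add]
  simp [div_eq_mul_inv]

theorem Finset.sum_filter_inter_insert_nonempty_sub {ι M : Type*} [DecidableEq ι]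
    [AddCommGroup M] (S : Finset (Finset ι)) (g : Finset ι → M) (j : ι) (u : Finset ι) :
    ∑ v ∈ S with (v ∩ insert j u).Nonempty, g v - ∑ v ∈ S with (v ∩ u).Nonempty, g v =
      ∑ v ∈ S with j ∈ v ∧ Disjoint v u, g v := by
  rw [sum_filter, sum_filter, sum_filter, ← sum_sub_distrib]
  refine sum_congr rfl fun v _ => ?_
  simp only [disjoint_iff_inter_eq_empty, ← not_nonempty_iff_eq_empty]
  by_cases hvu : (v ∩ u).Nonempty <;> by_cases hjv : j ∈ v <;> simp [hvu, hjv]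

theorem Finset.sum_powerset_erase_mul_sum_disjoint {ι R : Type*} [Fintype ι] [DecidableEq ι]
    [CommSemiring R] (c g : Finset ι → R) (j : ι) :
    ∑ u ∈ (univ.erase j).powerset, c u * ∑ v ∈ univ.powerset with j ∈ v ∧ Disjoint v u, g v =
      ∑ v ∈ univ.powerset with j ∈ v, g v * ∑ u ∈ (univ \ v).powerset, c u := by
  simp_rw [mul_sum, mul_comm (g _)]
  refine sum_comm' fun u v => ?_
  simp only [mem_powerset, mem_filter, subset_univ, true_and, subset_sdiff, subset_erase]
  exact ⟨fun ⟨_, hjv, hvu⟩ => ⟨hvu.symm, hjv⟩,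
    fun ⟨huv, hjv⟩ => ⟨fun hju => disjoint_left.mp huv hju hjv, hjv, huv.symm⟩⟩

theorem Finset.sum_powerset_compl_inv_choose {ι K : Type*} [Fintype ι] [DecidableEq ι] [Field K]
    [CharZero K] {v : Finset ι} (hv : v.Nonempty) :
    ∑ u ∈ (univ \ v).powerset, ((Fintype.card ι - 1).choose #u : K)⁻¹ =
      Fintype.card ι / #v := by
  obtain ⟨r, hr⟩ : ∃ r, #v = r + 1 := ⟨#v - 1, by have := hv.card_pos; omega⟩
  have hcard : #(univ \ v) + #v = Fintype.card ι := by
    rw [card_sdiff_add_card_eq_card (subset_univ v), card_univ]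
  rw [show Fintype.card ι - 1 = #(univ \ v) + r by omega, sum_powerset_inv_choose_card_add,
    ← hcard, hr]
  push_cast
  ring

theorem totalEffect_insert_sub {d : ℕ} (μ : Fin d → Measure ℝ) (f : (Fin d → ℝ) → ℝ)
    (j : Fin d) (u : Finset (Fin d)) :
    totalEffect μ f (insert j u) - totalEffect μ f u =
      ∑ v ∈ univ.powerset with j ∈ v ∧ Disjoint v u, sigmaSq μ f v :=
  sum_filter_inter_insert_nonempty_sub _ _ j u

theorem shapley_eq_sum_sigmaSq_div_card_general {d : ℕ} (μ : Fin d → Measure ℝ)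
    (f : (Fin d → ℝ) → ℝ) (j : Fin d) :
    shapley μ f j =
      ∑ u ∈ (Finset.univ : Finset (Fin d)).powerset.filter (fun u => j ∈ u),
        sigmaSq μ f u / (u.card : ℝ) := by
  have hd : (d : ℝ) ≠ 0 := Nat.cast_ne_zero.mpr j.pos.ne'
  simp_rw [shapley, totalEffect_insert_sub]
  rw [sum_powerset_erase_mul_sum_disjoint, mul_sum]
  refine sum_congr rfl fun v hv => ?_
  have hjv : j ∈ v := (mem_filter.mp hv).2
  have hweight := sum_powerset_compl_inv_choose (K := ℝ) ⟨j, hjv⟩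
  rw [Fintype.card_fin] at hweight
  rw [hweight]
  field_simp

/-- ANOVA representation of the Shapley effect: `φ_j = ∑_{u ∋ j} σ_u² / |u|`. -/
theorem shapley_eq_sum_sigmaSq_div_card {d : ℕ} (μ : Fin d → Measure ℝ)
    [∀ i, IsProbabilityMeasure (μ i)] (f : (Fin d → ℝ) → ℝ)
    (hf : MemLp f 2 (Measure.pi μ)) (j : Fin d) :
    shapley μ f j =
      ∑ u ∈ (Finset.univ : Finset (Fin d)).powerset.filter (fun u => j ∈ u),
        sigmaSq μ f u / (u.card : ℝ) :=
  shapley_eq_sum_sigmaSq_div_card_general μ f j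
end

section
/- For the Ishigami function with uniform inputs on [−π,π]³, the Shapley effects are φ₁ = τ̲²_{{1}} + 4π⁸b²/225, φ₂ = τ̲²_{{2}} = a²/8, and φ₃ = 4π⁸b²/225, where τ̲²_{{1}} = (1/2)(1 + π⁴b/5)². -/
open MeasureTheory Finset

/-- The ANOVA representation of the Shapley effect, `φ_j = ∑_{∅ ≠ u ∋ j} σ_u² / |u|`. -/
noncomputable def shapleyAnova {d : ℕ} (μ : Fin d → Measure ℝ) (f : (Fin d → ℝ) → ℝ)
    (j : Fin d) : ℝ :=
  ∑ u ∈ (Finset.univ : Finset (Fin d)).powerset.filter (fun u => j ∈ u),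
    sigmaSq μ f u / (u.card : ℝ)

/-- The uniform probability measure on `[-π, π]`. -/
noncomputable def unifPi : Measure ℝ :=
  ENNReal.ofReal (2 * Real.pi)⁻¹ • volume.restrict (Set.Icc (-Real.pi) Real.pi)

/-- The Ishigami function `f(x₁,x₂,x₃) = (1 + b x₃⁴) sin x₁ + a (sin x₂)²`. -/
noncomputable def ishigami (a b : ℝ) (x : Fin 3 → ℝ) : ℝ :=
  (1 + b * (x 2) ^ 4) * Real.sin (x 0) + a * (Real.sin (x 1)) ^ 2

/-!
The Ishigami function is the sum of the product functions `sin x₁ · 1 · (1 + b x₃⁴)` and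
`1 · a sin² x₂ · 1`. For a product `∏ gᵢ(xᵢ)` of independent inputs the ANOVA components are
`∏_{i ∈ u} (gᵢ - E gᵢ) · ∏_{i ∉ u} E gᵢ`, because their partial sums over the subsets of `u` are
the conditional means `∏_{i ∈ u} gᵢ · ∏_{i ∉ u} E gᵢ`, which characterise the ANOVA components.
The decomposition is linear, and by Fubini `∫ f_u h_u` factorises into one-dimensional covariances
and products of means. The two Ishigami products are orthogonal since `sin` has mean zero and is
uncorrelated with constants, so every `σ²_u` is a product of elementary integrals over `[-π, π]`.
-/

open ProbabilityTheory

theorem sum_powerset_eq_add_sum_ssubsets {ι M : Type*} [DecidableEq ι] [AddCommMonoid M]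
    (u : Finset ι) (F : Finset ι → M) :
    ∑ v ∈ u.powerset, F v = F u + ∑ v ∈ u.ssubsets, F v :=
  (add_sum_erase _ _ (mem_powerset_self u)).symm

theorem prod_ite_mem_eq_sum_powerset {ι R : Type*} [Fintype ι] [DecidableEq ι] [CommRing R]
    (u : Finset ι) (a m : ι → R) :
    ∏ i, (if i ∈ u then a i else m i) =
      ∑ v ∈ u.powerset, ∏ i, (if i ∈ v then a i - m i else m i) := by
  have split : ∀ (v : Finset ι) (c : ι → R), ∏ i, (if i ∈ v then c i else m i) =
      (∏ i ∈ v, c i) * ∏ i ∈ vᶜ, m i := by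
    intro v c
    rw [prod_ite, filter_mem_eq_inter, univ_inter, filter_not, filter_mem_eq_inter, univ_inter,
      compl_eq_univ_sdiff]
  calc ∏ i, (if i ∈ u then a i else m i)
      = (∏ i ∈ u, ((a i - m i) + m i)) * ∏ i ∈ uᶜ, m i := by simp [split]
    _ = ∑ v ∈ u.powerset, (∏ i ∈ v, (a i - m i)) * ∏ i ∈ vᶜ, m i := by
      rw [prod_add, sum_mul]
      refine sum_congr rfl fun v hv => ?_
      have hvu := mem_powerset.mp hv
      rw [mul_assoc, ← prod_union (disjoint_sdiff.mono_left sdiff_subset : Disjoint (u \ v) uᶜ)]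
      congr 2
      ext i
      simp only [mem_union, mem_sdiff, mem_compl]
      tauto
    _ = _ := by simp only [split]

section Anova

variable {d : ℕ} (μ : Fin d → Measure ℝ)

theorem anova_eq_integral_sub_sum (f : (Fin d → ℝ) → ℝ) (u : Finset (Fin d))
    (x : Fin d → ℝ) :
    anova μ f u x = (∫ y, f (fun i => if i ∈ u then x i else y i) ∂Measure.pi μ) -
      ∑ v ∈ u.ssubsets, anova μ f v x := by
  rw [anova, sum_attach (u.powerset.erase u) (fun v => anova μ f v x)]
  rfl

theorem integral_section_eq_sum_anova (f : (Fin d → ℝ) → ℝ) (u : Finset (Fin d))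
    (x : Fin d → ℝ) :
    ∫ y, f (fun i => if i ∈ u then x i else y i) ∂Measure.pi μ =
      ∑ v ∈ u.powerset, anova μ f v x := by
  rw [sum_powerset_eq_add_sum_ssubsets, anova_eq_integral_sub_sum]
  ring

theorem anova_eq_of_integral_section_eq_sum (f : (Fin d → ℝ) → ℝ)
    (F : Finset (Fin d) → (Fin d → ℝ) → ℝ)
    (hF : ∀ (u : Finset (Fin d)) (x : Fin d → ℝ),
      ∫ y, f (fun i => if i ∈ u then x i else y i) ∂Measure.pi μ =
        ∑ v ∈ u.powerset, F v x)
    (u : Finset (Fin d)) :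
    anova μ f u = F u := by
  induction u using Finset.strongInduction with
  | H u ih =>
    funext x
    have hsum : ∑ v ∈ u.ssubsets, anova μ f v x = ∑ v ∈ u.ssubsets, F v x :=
      sum_congr rfl fun v hv => congrFun (ih v (mem_ssubsets.mp hv)) x
    rw [anova_eq_integral_sub_sum, hsum, hF, sum_powerset_eq_add_sum_ssubsets]
    ring

theorem anova_add {f g : (Fin d → ℝ) → ℝ}
    (hf : ∀ (u : Finset (Fin d)) (x : Fin d → ℝ),
      Integrable (fun y => f (fun i => if i ∈ u then x i else y i)) (Measure.pi μ))
    (hg : ∀ (u : Finset (Fin d)) (x : Fin d → ℝ),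
      Integrable (fun y => g (fun i => if i ∈ u then x i else y i)) (Measure.pi μ))
    (u : Finset (Fin d)) :
    anova μ (f + g) u = anova μ f u + anova μ g u := by
  refine anova_eq_of_integral_section_eq_sum μ (f + g) (fun v => anova μ f v + anova μ g v)
    (fun v x => ?_) u
  simp only [Pi.add_apply, integral_add (hf v x) (hg v x), integral_section_eq_sum_anova,
    sum_add_distrib]

end Anova

noncomputable def anovaProdCov {d : ℕ} (μ : Fin d → Measure ℝ) (g h : Fin d → ℝ → ℝ)
    (u : Finset (Fin d)) : ℝ :=
  ∏ i, if i ∈ u then cov[g i, h i; μ i] else (∫ t, g i t ∂μ i) * ∫ t, h i t ∂μ i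

theorem anovaProdCov_self {d : ℕ} (μ : Fin d → Measure ℝ) {g : Fin d → ℝ → ℝ}
    (hg : ∀ i, AEMeasurable (g i) (μ i)) (u : Finset (Fin d)) :
    anovaProdCov μ g g u =
      ∏ i, if i ∈ u then Var[g i; μ i] else (∫ t, g i t ∂μ i) ^ 2 := by
  refine prod_congr rfl fun i _ => ?_
  rw [covariance_self (hg i), sq]

section Product

variable {d : ℕ} (μ : Fin d → Measure ℝ) [∀ i, IsProbabilityMeasure (μ i)]

theorem integral_section_prod (g : Fin d → ℝ → ℝ) (u : Finset (Fin d)) (x : Fin d → ℝ) :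
    ∫ y, ∏ i, g i (if i ∈ u then x i else y i) ∂Measure.pi μ =
      ∏ i, if i ∈ u then g i (x i) else ∫ t, g i t ∂μ i := by
  simp_rw [apply_ite (g _)]
  rw [integral_fintype_prod_eq_prod (fun i t => if i ∈ u then g i (x i) else g i t)]
  congr 1 with i
  split_ifs <;> simp

theorem integrable_section_prod {g : Fin d → ℝ → ℝ} (hg : ∀ i, Integrable (g i) (μ i))
    (u : Finset (Fin d)) (x : Fin d → ℝ) :
    Integrable (fun y => ∏ i, g i (if i ∈ u then x i else y i)) (Measure.pi μ) := by
  simp_rw [apply_ite (g _)]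
  exact Integrable.fintype_prod_dep (f := fun i t => if i ∈ u then g i (x i) else g i t)
    fun i => by split_ifs <;> simp [hg i]

theorem anova_prod (g : Fin d → ℝ → ℝ) (u : Finset (Fin d)) (x : Fin d → ℝ) :
    anova μ (fun x => ∏ i, g i (x i)) u x =
      ∏ i, if i ∈ u then g i (x i) - ∫ t, g i t ∂μ i else ∫ t, g i t ∂μ i := by
  rw [anova_eq_of_integral_section_eq_sum μ _ (fun v x => ∏ i, if i ∈ v then
    g i (x i) - ∫ t, g i t ∂μ i else ∫ t, g i t ∂μ i) (fun v x => ?_)]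
  rw [integral_section_prod, prod_ite_mem_eq_sum_powerset]

theorem integral_anova_prod_mul_anova_prod (g h : Fin d → ℝ → ℝ) (u : Finset (Fin d)) :
    ∫ x, anova μ (fun x => ∏ i, g i (x i)) u x * anova μ (fun x => ∏ i, h i (x i)) u x
      ∂Measure.pi μ = anovaProdCov μ g h u := by
  simp_rw [anova_prod, ← prod_mul_distrib]
  rw [integral_fintype_prod_eq_prod (fun i t =>
    (if i ∈ u then g i t - ∫ s, g i s ∂μ i else ∫ s, g i s ∂μ i) *
      (if i ∈ u then h i t - ∫ s, h i s ∂μ i else ∫ s, h i s ∂μ i))]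
  refine prod_congr rfl fun i _ => ?_
  split_ifs <;> simp [covariance]

theorem integrable_anova_prod_mul_anova_prod {g h : Fin d → ℝ → ℝ}
    (hg : ∀ i, MemLp (g i) 2 (μ i)) (hh : ∀ i, MemLp (h i) 2 (μ i)) (u : Finset (Fin d)) :
    Integrable (fun x => anova μ (fun x => ∏ i, g i (x i)) u x *
      anova μ (fun x => ∏ i, h i (x i)) u x) (Measure.pi μ) := by
  simp_rw [anova_prod, ← prod_mul_distrib]
  refine Integrable.fintype_prod_dep (f := fun i t =>
    (if i ∈ u then g i t - ∫ s, g i s ∂μ i else ∫ s, g i s ∂μ i) *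
      (if i ∈ u then h i t - ∫ s, h i s ∂μ i else ∫ s, h i s ∂μ i)) fun i => ?_
  split_ifs
  · exact ((hg i).sub (memLp_const _)).integrable_mul ((hh i).sub (memLp_const _))
  · exact integrable_const _

theorem sigmaSq_add_prod {g h : Fin d → ℝ → ℝ}
    (hg : ∀ i, MemLp (g i) 2 (μ i)) (hh : ∀ i, MemLp (h i) 2 (μ i)) (u : Finset (Fin d)) :
    sigmaSq μ (fun x => ∏ i, g i (x i) + ∏ i, h i (x i)) u =
      anovaProdCov μ g g u + 2 * anovaProdCov μ g h u + anovaProdCov μ h h u := by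
  set A := anova μ (fun x => ∏ i, g i (x i)) u
  set B := anova μ (fun x => ∏ i, h i (x i)) u
  have hsum : anova μ (fun x => ∏ i, g i (x i) + ∏ i, h i (x i)) u = A + B :=
    anova_add μ (integrable_section_prod μ fun i => (hg i).integrable one_le_two)
      (integrable_section_prod μ fun i => (hh i).integrable one_le_two) u
  have hAA : Integrable (fun x => A x * A x) (Measure.pi μ) :=
    integrable_anova_prod_mul_anova_prod μ hg hg u
  have hAB : Integrable (fun x => 2 * (A x * B x)) (Measure.pi μ) :=
    (integrable_anova_prod_mul_anova_prod μ hg hh u).const_mul 2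
  have hBB : Integrable (fun x => B x * B x) (Measure.pi μ) :=
    integrable_anova_prod_mul_anova_prod μ hh hh u
  calc sigmaSq μ (fun x => ∏ i, g i (x i) + ∏ i, h i (x i)) u
      = ∫ x, (A x * A x + 2 * (A x * B x)) + B x * B x ∂Measure.pi μ := by
        simp only [sigmaSq, hsum, Pi.add_apply]
        congr 1 with x
        ring
    _ = _ := by
      rw [integral_add (f := fun x => A x * A x + 2 * (A x * B x)) (hAA.add hAB) hBB,
        integral_add hAA hAB, integral_const_mul, integral_anova_prod_mul_anova_prod,
        integral_anova_prod_mul_anova_prod, integral_anova_prod_mul_anova_prod]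

end Product

theorem mainEffect_singleton {d : ℕ} (μ : Fin d → Measure ℝ) (f : (Fin d → ℝ) → ℝ)
    (j : Fin d) :
    mainEffect μ f {j} = sigmaSq μ f {j} := by
  have hsub : ({j} : Finset (Fin d)).powerset.erase ∅ = {{j}} := by
    ext v
    simp only [mem_erase, mem_powerset, subset_singleton_iff, mem_singleton]
    exact ⟨fun ⟨hne, h⟩ => h.resolve_left hne, fun h => ⟨h ▸ singleton_ne_empty j, Or.inr h⟩⟩
  rw [mainEffect, hsub, sum_singleton]

section UnifPi

open Real

instance isProbabilityMeasure_unifPi : IsProbabilityMeasure unifPi := by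
  constructor
  rw [unifPi, Measure.smul_apply, Measure.restrict_apply_univ, Real.volume_Icc, smul_eq_mul,
    ← ENNReal.ofReal_mul (by positivity)]
  rw [show (2 * π)⁻¹ * (π - -π) = 1 by field_simp; ring, ENNReal.ofReal_one]

theorem integral_unifPi (g : ℝ → ℝ) :
    ∫ t, g t ∂unifPi = (2 * π)⁻¹ * ∫ t in -π..π, g t := by
  rw [unifPi, integral_smul_measure, ENNReal.toReal_ofReal (by positivity),
    integral_Icc_eq_integral_Ioc, ← intervalIntegral.integral_of_le (by linarith [pi_pos]),
    smul_eq_mul]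

theorem Continuous.integrable_unifPi {g : ℝ → ℝ} (hg : Continuous g) : Integrable g unifPi :=
  hg.integrableOn_Icc.smul_measure ENNReal.ofReal_ne_top

theorem Continuous.memLp_two_unifPi {g : ℝ → ℝ} (hg : Continuous g) : MemLp g 2 unifPi :=
  (memLp_two_iff_integrable_sq hg.aestronglyMeasurable).2 (hg.pow 2).integrable_unifPi

theorem integral_sin_unifPi : ∫ t, sin t ∂unifPi = 0 := by
  simp [integral_unifPi]

theorem integral_sin_sq_unifPi : ∫ t, sin t ^ 2 ∂unifPi = 1 / 2 := by
  rw [integral_unifPi, integral_sin_sq, sin_neg, sin_pi]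
  field_simp
  ring

theorem integral_sin_pow_four_unifPi : ∫ t, sin t ^ 4 ∂unifPi = 3 / 8 := by
  rw [integral_unifPi, integral_sin_pow, integral_sin_sq, sin_neg, sin_pi]
  field_simp
  ring

theorem integral_even_pow_unifPi (k : ℕ) :
    ∫ t, t ^ (2 * k) ∂unifPi = π ^ (2 * k) / (2 * k + 1) := by
  rw [integral_unifPi, integral_pow, (odd_two_mul_add_one k).neg_pow]
  push_cast
  field_simp
  ring

theorem integral_const_add_mul_pow_four_unifPi (b : ℝ) :
    ∫ t, 1 + b * t ^ 4 ∂unifPi = 1 + π ^ 4 * b / 5 := by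
  have h4 := integral_even_pow_unifPi 2
  norm_num at h4
  rw [integral_add (integrable_const 1) ((continuous_pow 4).integrable_unifPi.const_mul b),
    integral_const_mul, h4, integral_const, probReal_univ, one_smul]
  ring

theorem variance_sin_unifPi : Var[sin; unifPi] = 1 / 2 := by
  rw [variance_eq_sub continuous_sin.memLp_two_unifPi]
  simp [integral_sin_unifPi, integral_sin_sq_unifPi]

theorem variance_const_add_mul_pow_four_unifPi (b : ℝ) :
    Var[fun t => 1 + b * t ^ 4; unifPi] = 16 * π ^ 8 * b ^ 2 / 225 := by
  have h4 := integral_even_pow_unifPi 2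
  have h8 := integral_even_pow_unifPi 4
  norm_num at h4 h8
  rw [variance_const_add (by fun_prop), variance_const_mul,
    variance_eq_sub (continuous_pow 4).memLp_two_unifPi]
  simp only [Pi.pow_apply, ← pow_mul, h4, h8]
  ring

theorem variance_mul_sin_sq_unifPi (a : ℝ) :
    Var[fun t => a * sin t ^ 2; unifPi] = a ^ 2 / 8 := by
  have hsq : Continuous fun t => sin t ^ 2 := by fun_prop
  rw [variance_const_mul, variance_eq_sub hsq.memLp_two_unifPi]
  simp only [Pi.pow_apply, ← pow_mul, integral_sin_sq_unifPi, integral_sin_pow_four_unifPi]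
  ring

end UnifPi

section Ishigami

open Real

noncomputable def ishigamiFactors₁ (b : ℝ) : Fin 3 → ℝ → ℝ :=
  ![sin, fun _ => 1, fun t => 1 + b * t ^ 4]

noncomputable def ishigamiFactors₂ (a : ℝ) : Fin 3 → ℝ → ℝ :=
  ![fun _ => 1, fun t => a * sin t ^ 2, fun _ => 1]

theorem ishigami_eq_add_prod (a b : ℝ) :
    ishigami a b =
      fun x => ∏ i, ishigamiFactors₁ b i (x i) + ∏ i, ishigamiFactors₂ a i (x i) := by
  funext x
  simp [ishigami, ishigamiFactors₁, ishigamiFactors₂, Fin.prod_univ_three, mul_comm]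

theorem continuous_ishigamiFactors₁ (b : ℝ) (i : Fin 3) :
    Continuous (ishigamiFactors₁ b i) := by
  fin_cases i
  exacts [continuous_sin, continuous_const, (by fun_prop : Continuous fun t : ℝ => 1 + b * t ^ 4)]

theorem continuous_ishigamiFactors₂ (a : ℝ) (i : Fin 3) :
    Continuous (ishigamiFactors₂ a i) := by
  fin_cases i
  exacts [continuous_const, (by fun_prop : Continuous fun t => a * sin t ^ 2), continuous_const]

theorem anovaProdCov_ishigamiFactors_eq_zero (a b : ℝ) (u : Finset (Fin 3)) :
    anovaProdCov (fun _ => unifPi) (ishigamiFactors₁ b) (ishigamiFactors₂ a) u = 0 := by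
  refine prod_eq_zero (mem_univ 0) ?_
  split_ifs
  · exact covariance_const_right 1
  · simp [ishigamiFactors₁, integral_sin_unifPi]

theorem sigmaSq_ishigami (a b : ℝ) (u : Finset (Fin 3)) :
    sigmaSq (fun _ => unifPi) (ishigami a b) u =
      (if 0 ∈ u then 1 / 2 else 0) * (if 1 ∈ u then 0 else 1) *
        (if 2 ∈ u then 16 * π ^ 8 * b ^ 2 / 225 else (1 + π ^ 4 * b / 5) ^ 2) +
      (if 0 ∈ u then 0 else 1) * (if 1 ∈ u then a ^ 2 / 8 else (a / 2) ^ 2) *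
        (if 2 ∈ u then 0 else 1) := by
  rw [ishigami_eq_add_prod, sigmaSq_add_prod _
    (fun i => (continuous_ishigamiFactors₁ b i).memLp_two_unifPi)
    (fun i => (continuous_ishigamiFactors₂ a i).memLp_two_unifPi),
    anovaProdCov_ishigamiFactors_eq_zero,
    anovaProdCov_self _ (fun i => (continuous_ishigamiFactors₁ b i).aemeasurable),
    anovaProdCov_self _ (fun i => (continuous_ishigamiFactors₂ a i).aemeasurable),
    Fin.prod_univ_three, Fin.prod_univ_three]
  split_ifs <;> simp [ishigamiFactors₁, ishigamiFactors₂, variance_sin_unifPi,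
    integral_sin_unifPi, variance_const_add_mul_pow_four_unifPi, variance_mul_sin_sq_unifPi,
    integral_const_add_mul_pow_four_unifPi, integral_const_mul, integral_sin_sq_unifPi,
    variance_eq_integral, div_eq_mul_inv]

end Ishigami

theorem ishigami_shapley_effects_general (a b : ℝ) :
    shapleyAnova (fun _ => unifPi) (ishigami a b) 0 =
      mainEffect (fun _ => unifPi) (ishigami a b) {0} +
        4 * Real.pi ^ 8 * b ^ 2 / 225 ∧
    mainEffect (fun _ => unifPi) (ishigami a b) {0} =
      (1 / 2) * (1 + Real.pi ^ 4 * b / 5) ^ 2 ∧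
    shapleyAnova (fun _ => unifPi) (ishigami a b) 1 =
      mainEffect (fun _ => unifPi) (ishigami a b) {1} ∧
    mainEffect (fun _ => unifPi) (ishigami a b) {1} = a ^ 2 / 8 ∧
    shapleyAnova (fun _ => unifPi) (ishigami a b) 2 =
      4 * Real.pi ^ 8 * b ^ 2 / 225 := by
  have h0 : (univ : Finset (Fin 3)).powerset.filter (0 ∈ ·) =
      {{0}, {0, 1}, {0, 2}, {0, 1, 2}} := by decide
  have h1 : (univ : Finset (Fin 3)).powerset.filter (1 ∈ ·) =
      {{1}, {0, 1}, {1, 2}, {0, 1, 2}} := by decide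
  have h2 : (univ : Finset (Fin 3)).powerset.filter (2 ∈ ·) =
      {{2}, {0, 2}, {1, 2}, {0, 1, 2}} := by decide
  simp only [shapleyAnova, mainEffect_singleton, h0, h1, h2]
  refine ⟨?_, ?_, ?_, ?_, ?_⟩ <;> simp +decide [sigmaSq_ishigami] <;> ring

/-- Shapley effects of the Ishigami function with independent uniform inputs on
`[-π, π]³`: `φ₁ = τ̲²₁ + 4π⁸b²/225` with `τ̲²₁ = (1/2)(1 + π⁴b/5)²`,
`φ₂ = τ̲²₂ = a²/8`, and `φ₃ = 4π⁸b²/225`. -/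
theorem ishigami_shapley_effects (a b : ℝ) (ha : 0 < a) (hb : 0 < b) :
    shapleyAnova (fun _ => unifPi) (ishigami a b) 0 =
      mainEffect (fun _ => unifPi) (ishigami a b) {0} +
        4 * Real.pi ^ 8 * b ^ 2 / 225 ∧
    mainEffect (fun _ => unifPi) (ishigami a b) {0} =
      (1 / 2) * (1 + Real.pi ^ 4 * b / 5) ^ 2 ∧
    shapleyAnova (fun _ => unifPi) (ishigami a b) 1 =
      mainEffect (fun _ => unifPi) (ishigami a b) {1} ∧
    mainEffect (fun _ => unifPi) (ishigami a b) {1} = a ^ 2 / 8 ∧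
    shapleyAnova (fun _ => unifPi) (ishigami a b) 2 =
      4 * Real.pi ^ 8 * b ^ 2 / 225 :=
  ishigami_shapley_effects_general a b
end
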